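/- The one-color L, L', R' matrices satisfy the mixed Yang–Baxter equation: for all boundary values I_1, J_1, K_1, I_3, J_3, K_3 ∈ {0,1}, the sum over interior I_2, J_2, K_2 ∈ {0,1} of R'_{y/x}(I_1,J_1;I_2,J_2)·L_x(K_1,J_2;K_2,J_3)·L'_y(K_2,I_2;K_3,I_3) equals the sum over interior values of L'_y(K_1,I_1;K_2,I_2)·L_x(K_2,J_1;K_3,J_2)·R'_{y/x}(I_2,J_2;I_3,J_3), as an identity of rational functions in x, y. -/

import Mathlib

/-!
Clearing the denominator `1 + y/x = (x + y)/x` turns `R'_{y/x}` into `1/(x + y)` times the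
matrix `R_{x,y}` with polynomial weights `x + y, x, y`. The mixed Yang–Baxter equation is
homogeneous of degree one in `R'`, so it reduces to the same equation for `R_{x,y}`, which is a
polynomial identity checked over the `2^6` boundary values.
-/

variable {F : Type*} [Field F]

def oneLw (x : F) : Bool → Bool → Bool → Bool → F
  | false, false, false, false => 1
  | true, false, false, true => x
  | false, true, false, true => x
  | true, false, true, false => 1
  | false, true, true, false => 1
  | _, _, _, _ => 0

def oneL'w (y : F) : Bool → Bool → Bool → Bool → F
  | true, false, true, false => 1
  | false, true, true, false => 1
  | true, true, true, true => y
  | false, false, false, false => 1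
  | true, false, false, true => y
  | _, _, _, _ => 0

def oneR'w (z : F) : Bool → Bool → Bool → Bool → F
  | false, true, false, true => 1 / (1 + z)
  | false, true, true, false => z / (1 + z)
  | true, false, false, true => 1 / (1 + z)
  | true, false, true, false => z / (1 + z)
  | false, false, false, false => 1
  | _, _, _, _ => 0

def oneRw (x y : F) : Bool → Bool → Bool → Bool → F
  | false, true, false, true => x
  | false, true, true, false => y
  | true, false, false, true => x
  | true, false, true, false => y
  | false, false, false, false => x + y
  | _, _, _, _ => 0

lemma add_ne_zero_of_one_add_div_ne_zero {x y : F} (hx : x ≠ 0) (hz : 1 + y / x ≠ 0) :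
    x + y ≠ 0 := by
  rwa [one_add_div hx, div_ne_zero_iff, and_iff_left hx] at hz

lemma oneR'w_div_eq {x y : F} (hx : x ≠ 0) (hxy : x + y ≠ 0) (i j k l : Bool) :
    oneR'w (y / x) i j k l = oneRw x y i j k l / (x + y) := by
  have h : 1 + y / x = (x + y) / x := one_add_div hx
  cases i <;> cases j <;> cases k <;> cases l <;> simp only [oneR'w, oneRw, h, zero_div] <;>
    field_simp

theorem oneRw_mixed_YBE (x y : F) (I₁ J₁ K₁ I₃ J₃ K₃ : Bool) :
    (∑ v : Bool × Bool × Bool,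
        oneRw x y I₁ J₁ v.1 v.2.1 * oneLw x K₁ v.2.1 v.2.2 J₃ *
          oneL'w y v.2.2 v.1 K₃ I₃)
      = ∑ v : Bool × Bool × Bool,
          oneL'w y K₁ I₁ v.2.2 v.1 * oneLw x v.2.2 J₁ K₃ v.2.1 *
            oneRw x y v.1 v.2.1 I₃ J₃ := by
  cases I₁ <;> cases J₁ <;> cases K₁ <;> cases I₃ <;> cases J₃ <;> cases K₃ <;>
    simp only [Fintype.sum_prod_type, Fintype.sum_bool, oneLw, oneL'w, oneRw] <;> ring

/-- The mixed Yang–Baxter equation for the one-color `L`, `L'`, `R'` matrices: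
for all boundary values, summing over the interior values `I₂, J₂, K₂`,
`∑ R'_{y/x}(I₁,J₁;I₂,J₂) L_x(K₁,J₂;K₂,J₃) L'_y(K₂,I₂;K₃,I₃)
  = ∑ L'_y(K₁,I₁;K₂,I₂) L_x(K₂,J₁;K₃,J₂) R'_{y/x}(I₂,J₂;I₃,J₃)`. -/
theorem one_color_mixed_YBE (x y : F) (hx : x ≠ 0) (hz : 1 + y / x ≠ 0)
    (I₁ J₁ K₁ I₃ J₃ K₃ : Bool) :
    (∑ v : Bool × Bool × Bool,
        oneR'w (y / x) I₁ J₁ v.1 v.2.1 * oneLw x K₁ v.2.1 v.2.2 J₃ *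
          oneL'w y v.2.2 v.1 K₃ I₃)
      = ∑ v : Bool × Bool × Bool,
          oneL'w y K₁ I₁ v.2.2 v.1 * oneLw x v.2.2 J₁ K₃ v.2.1 *
            oneR'w (y / x) v.1 v.2.1 I₃ J₃ := by
  have hxy := add_ne_zero_of_one_add_div_ne_zero hx hz
  simp only [oneR'w_div_eq hx hxy, div_mul_eq_mul_div, mul_div_assoc', ← Finset.sum_div]
  rw [oneRw_mixed_YBE]
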